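/- Let u = x_1^{a_1}···x_n^{a_n} be a monomial of degree d with a_1 > 0, let L^f(u) = {w monomial of degree d : w ≤_lex u} be the final lexsegment defined by u, and let I = (L^f(u)). Then depth(S/I) = 0. -/

import Mathlib

open MvPolynomial

/-- Exponent vectors of monomials in `n` variables; index `i` corresponds to the variable
`x_{i+1}`, so that the `toLex` order on exponent vectors is the lexicographic order on
monomials with `x_1 > x_2 > ⋯ > x_n`. -/
abbrev Mon (n : ℕ) := Fin n →₀ ℕ

/-- The degree of a monomial. -/
def monDeg {n : ℕ} (m : Mon n) : ℕ := ∑ i, m i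

/-- The lexsegment `L(u,v)`: monomials of degree `d` with `u ≥_lex w ≥_lex v`. -/
def lexSeg {n : ℕ} (d : ℕ) (u v : Mon n) : Set (Mon n) :=
  {w | monDeg w = d ∧ toLex v ≤ toLex w ∧ toLex w ≤ toLex u}

/-- The monomial ideal generated by a set of monomials. -/
noncomputable def monomialIdeal {n : ℕ} (k : Type*) [Field k] (T : Set (Mon n)) :
    Ideal (MvPolynomial (Fin n) k) :=
  Ideal.span ((fun m => (monomial m (1 : k) : MvPolynomial (Fin n) k)) '' T)

/-- The order `≺` on monomials of a fixed degree: `w ≺ w'` iff `ν₁(w) < ν₁(w')`, or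
`ν₁(w) = ν₁(w')` and `w >_lex w'`. -/
def prec {n : ℕ} [NeZero n] (z w : Mon n) : Prop :=
  z 0 < w 0 ∨ (z 0 = w 0 ∧ toLex w < toLex z)

/-- A set `T` of monomials, totally ordered by a relation `r`, generates an ideal with linear
quotients with respect to `r` if for every `w ∈ T` the colon ideal of the ideal generated by
the earlier monomials `{z ∈ T | r z w}` by `w` is generated by a subset of the variables. -/
noncomputable def hasLinearQuotientsWrt {n : ℕ} (k : Type*) [Field k] (T : Set (Mon n))
    (r : Mon n → Mon n → Prop) : Prop :=
  ∀ w ∈ T, ∃ V : Set (Fin n),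
    Submodule.colon (monomialIdeal k {z ∈ T | r z w})
        (Ideal.span {(monomial w (1 : k) : MvPolynomial (Fin n) k)}) =
      Ideal.span ((fun i => (X i : MvPolynomial (Fin n) k)) '' V)

/-- `max(m)`: the largest index of a variable dividing the monomial `m`. -/
def maxVar {n : ℕ} [NeZero n] (m : Mon n) : Fin n := WithBot.unbotD 0 m.support.max

/-- The shadow of a set of monomials. -/
def shad {n : ℕ} (T : Set (Mon n)) : Set (Mon n) :=
  {m | ∃ t ∈ T, ∃ i : Fin n, m = t + Finsupp.single i 1}

/-- A set of monomials is a lexsegment if it is of the form `L(u,v)`. -/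
def IsLexSegSet {n : ℕ} (T : Set (Mon n)) : Prop :=
  ∃ (e : ℕ) (u v : Mon n), monDeg u = e ∧ monDeg v = e ∧ toLex v ≤ toLex u ∧ T = lexSeg e u v

/-- A lexsegment is a completely lexsegment if all its iterated shadows are lexsegments. -/
def IsCompletelyLexSeg {n : ℕ} (T : Set (Mon n)) : Prop :=
  ∀ j : ℕ, IsLexSegSet (shad^[j] T)

/-- `set(w)` for `w ∈ L(u,v)`: the set of `s` with `x_s · w ∈ I_{≺ w}`, where `I_{≺ w}` is the
ideal generated by `{z ∈ L(u,v) | z ≺ w}`. -/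
noncomputable def setW {n : ℕ} [NeZero n] (k : Type*) [Field k] (d : ℕ) (u v : Mon n)
    (w : Mon n) : Set (Fin n) :=
  {s | (monomial (w + Finsupp.single s 1) (1 : k) : MvPolynomial (Fin n) k) ∈
    monomialIdeal k {z ∈ lexSeg d u v | prec z w}}

/-- `g` is the value of the decomposition function of `I = (L(u,v))` at the monomial `m`:
`g` is the `≺`-smallest `w' ∈ L(u,v)` such that `m ∈ I_{⪯ w'}`. -/
noncomputable def isDecompOf {n : ℕ} [NeZero n] (k : Type*) [Field k] (d : ℕ) (u v : Mon n)
    (m : Mon n) (g : Mon n) : Prop :=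
  g ∈ lexSeg d u v ∧
  (monomial m (1 : k) : MvPolynomial (Fin n) k) ∈
      monomialIdeal k {z ∈ lexSeg d u v | prec z g ∨ z = g} ∧
  ∀ w' ∈ lexSeg d u v,
    (monomial m (1 : k) : MvPolynomial (Fin n) k) ∈
        monomialIdeal k {z ∈ lexSeg d u v | prec z w' ∨ z = w'} →
      g = w' ∨ prec g w'

/-- Reversing the variables: the `toLex` order on `revMon` exponent vectors is the
lexicographic order induced by `x_n > x_{n-1} > ⋯ > x_1`. -/
def revMon {n : ℕ} (m : Mon n) : Mon n := Finsupp.equivMapDomain Fin.revPerm m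

/-- The depth of `S/I` with respect to the graded maximal ideal `(x_1, …, x_n)`:
the maximal length of an `S/I`-regular sequence of elements of `(x_1, …, x_n)`. -/
noncomputable def ringDepth {n : ℕ} {k : Type*} [Field k]
    (I : Ideal (MvPolynomial (Fin n) k)) : ℕ :=
  sSup {r : ℕ | ∃ rs : List (MvPolynomial (Fin n) k), rs.length = r ∧
    (∀ x ∈ rs, x ∈ Ideal.span (Set.range (X : Fin n → MvPolynomial (Fin n) k))) ∧
    RingTheory.Sequence.IsRegular (MvPolynomial (Fin n) k ⧸ I) rs}

/-!
`u / x_1` is a socle element of `S/I`: it has degree `d - 1`, so it is not in `I`, while every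
`x_i · u / x_1` has degree `d` and is `≤_lex u`, since it is either `u` or has a smaller exponent
of `x_1`. Hence every element of the maximal ideal is a zero divisor on `S/I`.
-/

lemma RingTheory.Sequence.IsWeaklyRegular.eq_nil_of_le_colon {R : Type*} [CommRing R]
    {I J : Ideal R} {f : R} (hf : f ∉ I) (hJ : J ≤ I.colon (Ideal.span {f})) {rs : List R}
    (hrs : ∀ x ∈ rs, x ∈ J) (hreg : IsWeaklyRegular (R ⧸ I) rs) : rs = [] := by
  obtain _ | ⟨a, rest⟩ := rs
  · rfl
  have ha_reg : IsSMulRegular (R ⧸ I) a := ((isWeaklyRegular_cons_iff _ _ _).mp hreg).1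
  have haf : a * f ∈ I := Ideal.mem_colon_span_singleton.mp (hJ (hrs a List.mem_cons_self))
  have hf_zero : Ideal.Quotient.mk I f = 0 :=
    ha_reg <| show a • Ideal.Quotient.mk I f = a • 0 by
      rw [smul_zero, Algebra.smul_def, Ideal.Quotient.algebraMap_eq, ← map_mul,
        Ideal.Quotient.eq_zero_iff_mem]
      exact haf
  exact (hf (Ideal.Quotient.eq_zero_iff_mem.mp hf_zero)).elim

lemma ringDepth_eq_zero_of_X_mul_mem {n : ℕ} {k : Type*} [Field k]
    {I : Ideal (MvPolynomial (Fin n) k)} {f : MvPolynomial (Fin n) k} (hf : f ∉ I)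
    (hX : ∀ i, X i * f ∈ I) : ringDepth I = 0 := by
  have hmax : Ideal.span (Set.range X) ≤ I.colon (Ideal.span {f}) := by
    rw [Ideal.span_le]
    rintro _ ⟨i, rfl⟩
    exact Ideal.mem_colon_span_singleton.mpr (hX i)
  refine Nat.le_zero.mp (csSup_le' ?_)
  rintro r ⟨rs, rfl, hrs, hreg⟩
  simp [hreg.toIsWeaklyRegular.eq_nil_of_le_colon hf hmax hrs]

lemma monDeg_add {n : ℕ} (a b : Mon n) : monDeg (a + b) = monDeg a + monDeg b := by
  simp [monDeg, Finset.sum_add_distrib]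

lemma monDeg_single {n : ℕ} (i : Fin n) : monDeg (Finsupp.single i 1) = 1 := by
  simp [monDeg, Finsupp.single_apply]

lemma monDeg_mono {n : ℕ} {a b : Mon n} (h : a ≤ b) : monDeg a ≤ monDeg b :=
  Finset.sum_le_sum fun i _ => h i

lemma toLex_lt_of_apply_zero_lt {n : ℕ} [NeZero n] {v w : Mon n} (h : v 0 < w 0) :
    toLex v < toLex w :=
  Finsupp.Lex.lt_iff.mpr ⟨0, fun j hj => absurd hj (Fin.not_lt_zero j), h⟩

lemma monomial_mem_monomialIdeal_iff {n : ℕ} {k : Type*} [Field k] {T : Set (Mon n)}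
    {m : Mon n} : (monomial m (1 : k)) ∈ monomialIdeal k T ↔ ∃ t ∈ T, t ≤ m := by
  simp [monomialIdeal, mem_ideal_span_monomial_image]

theorem depth_final_lexsegment_general {n : ℕ} [NeZero n] (k : Type*) [Field k]
    (d : ℕ) (u : Mon n) (hu : monDeg u = d) (ha1 : 0 < u 0) :
    ringDepth (monomialIdeal k {w : Mon n | monDeg w = d ∧ toLex w ≤ toLex u}) = 0 := by
  set m : Mon n := u - Finsupp.single 0 1
  have hmu : m + Finsupp.single 0 1 = u := tsub_add_cancel_of_le (Finsupp.single_le_iff.mpr ha1)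
  have hdeg : monDeg m + 1 = d := by rw [← hu, ← hmu, monDeg_add, monDeg_single]
  refine ringDepth_eq_zero_of_X_mul_mem (f := monomial m 1) ?_ fun i => ?_
  · rw [monomial_mem_monomialIdeal_iff]
    rintro ⟨t, ⟨ht, -⟩, htm⟩
    have hle := monDeg_mono htm
    omega
  · rw [X, monomial_mul, one_mul, add_comm, monomial_mem_monomialIdeal_iff]
    refine ⟨m + Finsupp.single i 1, ⟨by rw [monDeg_add, monDeg_single, hdeg], ?_⟩, le_rfl⟩
    rcases eq_or_ne i 0 with rfl | hi
    · rw [hmu]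
    · refine (toLex_lt_of_apply_zero_lt ?_).le
      rw [← hmu]
      simp [hi.symm]

/-- For the ideal generated by a final lexsegment `L^f(u)` with `u = x_1^{a_1} ⋯ x_n^{a_n}`,
`a_1 > 0`, one has `depth S/I = 0`. -/
theorem depth_final_lexsegment {n : ℕ} [NeZero n] (hn : 2 ≤ n) (k : Type*) [Field k]
    (d : ℕ) (hd : 2 ≤ d) (u : Mon n) (hu : monDeg u = d) (ha1 : 0 < u 0) :
    ringDepth (monomialIdeal k {w : Mon n | monDeg w = d ∧ toLex w ≤ toLex u}) = 0 :=
  depth_final_lexsegment_general k d u hu ha1
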